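/- arXiv:2506.18097 — 3 statements merged into one kernel-verified Lean document; each statement's English description precedes it below -/
import Mathlib

section
/- For any isotropic subspace S of V_ℂ ⊕ V*_ℂ (with respect to the canonical pairing), the intersection S ∩ V_ℂ equals the annihilator of the projection of S^⊥ to V*_ℂ: S ∩ V_ℂ = Ann(pr_{V*_ℂ}(S^⊥)). -/
/-!
Write the complex pairing as `⟨e, f⟩ = (B e f - i B (i e) f) / 2`, where `B` is the real split form
`B((x, ξ), (y, η)) = Re ξ(y) + Re η(x)` on `V_ℂ ⊕ V*_ℂ` viewed as a real space; `B` is nondegenerate.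
Since `S` is stable under multiplication by `i`, its complex orthogonal is its `B`-orthogonal, so
`S^⊥^⊥ = S`. For `e = (X, 0)` one has `⟨f, e⟩ = ξ_f(X) / 2`, hence `X ∈ Ann(pr S^⊥)` iff `e ∈ S^⊥^⊥`.
-/

open Module LinearMap

namespace LinearMap

variable {R M N : Type*} [CommSemiring R] [AddCommMonoid M] [Module R M] [AddCommMonoid N]
  [Module R N]

def splitForm (p : N →ₗ[R] M →ₗ[R] R) : LinearMap.BilinForm R (M × N) :=
  let A := (p.comp (snd R M N)).compl₂ (fst R M N)
  A + A.flip

variable (p : N →ₗ[R] M →ₗ[R] R)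

@[simp]
theorem splitForm_apply (e f : M × N) : splitForm p e f = p e.2 f.1 + p f.2 e.1 := rfl

theorem splitForm_isSymm : (splitForm p).IsSymm :=
  ⟨fun _ _ => add_comm _ _⟩

theorem splitForm_nondegenerate (hp : p.Nondegenerate) : (splitForm p).Nondegenerate := by
  have hL : (splitForm p).SeparatingLeft := fun e he =>
    Prod.ext (hp.2 e.1 fun ξ => by simpa using he (0, ξ))
      (hp.1 e.2 fun x => by simpa using he (x, 0))
  exact ⟨hL, fun f hf => hL f fun e => by rw [(splitForm_isSymm p).eq]; exact hf e⟩

end LinearMap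

namespace Module

variable (R V : Type*) [CommRing R] [AddCommGroup V] [Module R V]

def reDualPairing : (Dual R V × Dual R V) →ₗ[R] (V × V) →ₗ[R] R :=
  LinearMap.mk₂ R (fun ξ x => ξ.1 x.1 - ξ.2 x.2)
    (fun _ _ _ => by simp only [Prod.fst_add, Prod.snd_add, LinearMap.add_apply]; ring)
    (fun _ _ _ => by
      simp only [Prod.smul_fst, Prod.smul_snd, LinearMap.smul_apply, smul_eq_mul]; ring)
    (fun _ _ _ => by simp only [Prod.fst_add, Prod.snd_add, map_add]; ring)
    (fun _ _ _ => by simp only [Prod.smul_fst, Prod.smul_snd, map_smul, smul_eq_mul]; ring)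

variable {R V}

@[simp]
theorem reDualPairing_apply (ξ : Dual R V × Dual R V) (x : V × V) :
    reDualPairing R V ξ x = ξ.1 x.1 - ξ.2 x.2 := rfl

theorem reDualPairing_nondegenerate [Projective R V] : (reDualPairing R V).Nondegenerate := by
  refine ⟨fun ξ hξ => Prod.ext ?_ ?_, fun x hx => Prod.ext ?_ ?_⟩
  · ext v; simpa using hξ (v, 0)
  · ext v; simpa using hξ (0, -v)
  · exact (forall_dual_apply_eq_zero_iff R _).1 fun φ => by simpa using hx (φ, 0)
  · exact (forall_dual_apply_eq_zero_iff R _).1 fun φ => by simpa using hx (0, -φ)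

end Module

section ComplexModel

open Complex

variable {V : Type*} [AddCommGroup V] [Module ℝ V]

/-- `ξ₁ + iξ₂` evaluated ℂ-linearly on `X₁ + iX₂`, complexified spaces being stored as pairs
(real part, imaginary part). -/
def complexEval (η : Dual ℝ V × Dual ℝ V) (X : V × V) : ℂ :=
  ((η.1 X.1 - η.2 X.2 : ℝ) : ℂ) + ((η.2 X.1 + η.1 X.2 : ℝ) : ℂ) * I

noncomputable def complexPairing (e f : (V × V) × (Dual ℝ V × Dual ℝ V)) : ℂ :=
  1 / 2 * (complexEval e.2 f.1 + complexEval f.2 e.1)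

def mulI (e : (V × V) × (Dual ℝ V × Dual ℝ V)) : (V × V) × (Dual ℝ V × Dual ℝ V) :=
  ((-e.1.2, e.1.1), (-e.2.2, e.2.1))

theorem complexPairing_comm (e f : (V × V) × (Dual ℝ V × Dual ℝ V)) :
    complexPairing e f = complexPairing f e := by
  rw [complexPairing, complexPairing, add_comm]

theorem complexPairing_of_snd_eq_zero {e : (V × V) × (Dual ℝ V × Dual ℝ V)} (he : e.2 = 0)
    (f : (V × V) × (Dual ℝ V × Dual ℝ V)) : complexPairing f e = complexEval f.2 e.1 / 2 := by
  simp [complexPairing, complexEval, he, div_eq_inv_mul]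

theorem complexPairing_eq (e f : (V × V) × (Dual ℝ V × Dual ℝ V)) :
    complexPairing e f = (splitForm (reDualPairing ℝ V) e f -
      splitForm (reDualPairing ℝ V) (mulI e) f * I) / 2 := by
  simp only [complexPairing, complexEval, mulI, splitForm_apply, reDualPairing_apply, map_neg,
    LinearMap.neg_apply]
  push_cast
  ring

theorem complexPairing_eq_zero_iff {e f : (V × V) × (Dual ℝ V × Dual ℝ V)} :
    complexPairing e f = 0 ↔
      splitForm (reDualPairing ℝ V) e f = 0 ∧ splitForm (reDualPairing ℝ V) (mulI e) f = 0 := by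
  simp [complexPairing_eq, Complex.ext_iff, -splitForm_apply]

theorem forall_complexPairing_eq_zero_iff {S : Submodule ℝ ((V × V) × (Dual ℝ V × Dual ℝ V))}
    (hS : ∀ e ∈ S, mulI e ∈ S) {f : (V × V) × (Dual ℝ V × Dual ℝ V)} :
    (∀ s ∈ S, complexPairing s f = 0) ↔ f ∈ (splitForm (reDualPairing ℝ V)).orthogonal S := by
  simp only [complexPairing_eq_zero_iff, BilinForm.mem_orthogonal_iff]
  exact ⟨fun h s hs => (h s hs).1, fun h s hs => ⟨h s hs, h _ (hS s hs)⟩⟩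

end ComplexModel

theorem isotropic_intersection_annihilator_general
    {V : Type*} [AddCommGroup V] [Module ℝ V] [FiniteDimensional ℝ V]
    (S : Submodule ℝ ((V × V) × (Module.Dual ℝ V × Module.Dual ℝ V)))
    (ev : (Module.Dual ℝ V × Module.Dual ℝ V) → V × V → ℂ)
    (hev : ∀ (η : Module.Dual ℝ V × Module.Dual ℝ V) (X : V × V),
      ev η X = ((η.1 X.1 - η.2 X.2 : ℝ) : ℂ) + ((η.2 X.1 + η.1 X.2 : ℝ) : ℂ) * Complex.I)
    (pairing : ((V × V) × (Module.Dual ℝ V × Module.Dual ℝ V)) →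
      ((V × V) × (Module.Dual ℝ V × Module.Dual ℝ V)) → ℂ)
    (hpair : ∀ e f, pairing e f = (1 / 2 : ℂ) * (ev e.2 f.1 + ev f.2 e.1))
    (hJ : ∀ e ∈ S, (((-e.1.2, e.1.1), (-e.2.2, e.2.1)) :
      (V × V) × (Module.Dual ℝ V × Module.Dual ℝ V)) ∈ S) :
    {e : (V × V) × (Module.Dual ℝ V × Module.Dual ℝ V) | e ∈ S ∧ e.2 = 0} =
      {e : (V × V) × (Module.Dual ℝ V × Module.Dual ℝ V) | e.2 = 0 ∧
        ∀ f : (V × V) × (Module.Dual ℝ V × Module.Dual ℝ V),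
          (∀ s ∈ S, pairing s f = 0) → ev f.2 e.1 = 0} := by
  obtain rfl : ev = complexEval := funext₂ hev
  obtain rfl : pairing = complexPairing := funext₂ hpair
  ext e
  refine ⟨fun ⟨heS, he2⟩ => ⟨he2, fun f hf => ?_⟩, fun ⟨he2, he⟩ => ⟨?_, he2⟩⟩
  · have hef := hf e heS
    rwa [complexPairing_comm, complexPairing_of_snd_eq_zero he2, div_eq_zero_iff,
      or_iff_left two_ne_zero] at hef
  · rw [← BilinForm.orthogonal_orthogonal (splitForm_nondegenerate _ reDualPairing_nondegenerate)
      (splitForm_isSymm _).isRefl S]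
    intro f hf
    have hfe : complexPairing f e = 0 := by
      rw [complexPairing_of_snd_eq_zero he2, he f ((forall_complexPairing_eq_zero_iff hJ).2 hf),
        zero_div]
    exact (complexPairing_eq_zero_iff.1 hfe).1

/-- For an isotropic complex subspace `S` of `V_ℂ ⊕ V*_ℂ` (modeled on pairs
`(re, im)`) with respect to the canonical symmetric pairing, the intersection `S ∩ V_ℂ`
equals the annihilator of the projection of `S^⊥` to `V*_ℂ`. -/
theorem isotropic_intersection_annihilator
    {V : Type*} [AddCommGroup V] [Module ℝ V] [FiniteDimensional ℝ V]
    (S : Submodule ℝ ((V × V) × (Module.Dual ℝ V × Module.Dual ℝ V)))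
    (ev : (Module.Dual ℝ V × Module.Dual ℝ V) → V × V → ℂ)
    (hev : ∀ (η : Module.Dual ℝ V × Module.Dual ℝ V) (X : V × V),
      ev η X = ((η.1 X.1 - η.2 X.2 : ℝ) : ℂ) + ((η.2 X.1 + η.1 X.2 : ℝ) : ℂ) * Complex.I)
    (pairing : ((V × V) × (Module.Dual ℝ V × Module.Dual ℝ V)) →
      ((V × V) × (Module.Dual ℝ V × Module.Dual ℝ V)) → ℂ)
    (hpair : ∀ e f, pairing e f = (1 / 2 : ℂ) * (ev e.2 f.1 + ev f.2 e.1))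
    (hJ : ∀ e ∈ S, (((-e.1.2, e.1.1), (-e.2.2, e.2.1)) :
      (V × V) × (Module.Dual ℝ V × Module.Dual ℝ V)) ∈ S)
    (hiso : ∀ e ∈ S, ∀ f ∈ S, pairing e f = 0) :
    {e : (V × V) × (Module.Dual ℝ V × Module.Dual ℝ V) | e ∈ S ∧ e.2 = 0} =
      {e : (V × V) × (Module.Dual ℝ V × Module.Dual ℝ V) | e.2 = 0 ∧
        ∀ f : (V × V) × (Module.Dual ℝ V × Module.Dual ℝ V),
          (∀ s ∈ S, pairing s f = 0) → ev f.2 e.1 = 0} :=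
  isotropic_intersection_annihilator_general S ev hev pairing hpair hJ
end

section
/- With 𝒥_π as above (π₂♯ invertible), 𝒥_π is orthogonal with respect to the canonical symmetric pairing on V ⊕ V*, i.e., ⟨𝒥_π(e), 𝒥_π(f)⟩ = ⟨e, f⟩ for all e, f; moreover the upper-right block σ♯ = π₁♯(π₂♯)⁻¹π₁♯ + π₂♯ : V* → V is skew-symmetric (defines a bivector σ). -/
/-- With `𝒥_π` as in Statement 11 (`π₂♯` invertible), `𝒥_π` is orthogonal
for the canonical symmetric pairing `⟨(X,ξ),(Y,η)⟩ = ½(η X + ξ Y)` on `V ⊕ V*`, and the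
upper-right block `σ♯ = π₁♯(π₂♯)⁻¹π₁♯ + π₂♯` is skew-symmetric. -/
theorem Jpi_orthogonal_and_sigma_skew
    {V : Type*} [AddCommGroup V] [Module ℝ V] [FiniteDimensional ℝ V]
    (p1 : Module.Dual ℝ V →ₗ[ℝ] V)
    (e2 : Module.Dual ℝ V ≃ₗ[ℝ] V)
    (h1 : ∀ ξ η : Module.Dual ℝ V, η (p1 ξ) = - ξ (p1 η))
    (h2 : ∀ ξ η : Module.Dual ℝ V, η (e2 ξ) = - ξ (e2 η))
    (Jmap : V × Module.Dual ℝ V → V × Module.Dual ℝ V)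
    (hJmap : ∀ p : V × Module.Dual ℝ V,
      Jmap p = (-(p1 (e2.symm p.1)) + (p1 (e2.symm (p1 p.2)) + e2 p.2),
        -(e2.symm p.1) + e2.symm (p1 p.2))) :
    (∀ e f : V × Module.Dual ℝ V,
      (1 / 2 : ℝ) * ((Jmap f).2 (Jmap e).1 + (Jmap e).2 (Jmap f).1)
        = (1 / 2 : ℝ) * (f.2 e.1 + e.2 f.1)) ∧
    (∀ ξ η : Module.Dual ℝ V,
      η (p1 (e2.symm (p1 ξ)) + e2 ξ) = - ξ (p1 (e2.symm (p1 η)) + e2 η)) := by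
  -- skewness of e2.symm as a form on V
  have h2' : ∀ X Y : V, (e2.symm X) Y = - (e2.symm Y) X := by
    intro X Y
    have := h2 (e2.symm Y) (e2.symm X)
    simpa using this
  constructor
  · rintro ⟨X, ξ⟩ ⟨Y, η⟩
    simp only [hJmap, map_add, map_neg, LinearMap.add_apply, LinearMap.neg_apply]
    have k1 := h1 (e2.symm X) (e2.symm Y)
    have k2 := h1 (e2.symm (p1 ξ)) (e2.symm Y)
    have k3 := h1 (e2.symm (p1 η)) (e2.symm X)
    have k4 := h1 (e2.symm (p1 ξ)) (e2.symm (p1 η))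
    have k5 : (e2.symm Y) (e2 ξ) = - ξ Y := by
      have := h2 ξ (e2.symm Y); simpa using this
    have k6 : (e2.symm X) (e2 η) = - η X := by
      have := h2 η (e2.symm X); simpa using this
    have k7 : (e2.symm (p1 η)) (e2 ξ) = - ξ (p1 η) := by
      have := h2 ξ (e2.symm (p1 η)); simpa using this
    have k8 : (e2.symm (p1 ξ)) (e2 η) = - η (p1 ξ) := by
      have := h2 η (e2.symm (p1 ξ)); simpa using this
    have k9 := h1 ξ η
    ring_nf
    ring_nf at k1 k2 k3 k4 k5 k6 k7 k8 k9 ⊢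
    linarith
  · intro ξ η
    have a1 := h1 (e2.symm (p1 ξ)) η
    have a2 := h2' (p1 ξ) (p1 η)
    have a3 := h1 (e2.symm (p1 η)) ξ
    have a4 := h2 ξ η
    simp only [map_add]
    linarith
end

section
/- Let (σ, N) satisfy N ∘ σ♯ = σ♯ ∘ N* (σ a bivector on V, N : V → V linear). Define π = σ + iσ_N with σ_N♯ = N ∘ σ♯. Then the real part of Im(π♯) in V equals (N² + Id)(Im σ♯); in particular if N² = λ·Id for some λ ∈ ℝ with λ ≠ −1, then Im(π♯) ∩ V = Im σ♯ and Im(π♯) = (Im σ♯)_ℂ (π is quasi-real). -/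
/-- Let `(σ, N)` satisfy `N ∘ σ♯ = σ♯ ∘ N*` and `π = σ + iσ_N` with
`σ_N♯ = N ∘ σ♯`. Then the real part of `Im(π♯)` equals `(N² + Id)(Im σ♯)`; in particular,
if `N² = λ·Id` with `λ ≠ −1`, then `Im(π♯) ∩ V = Im σ♯` and `Im(π♯) = (Im σ♯)_ℂ`
(`π` is quasi-real). -/
theorem poisson_nijenhuis_quasi_real
    {V : Type*} [AddCommGroup V] [Module ℝ V] [FiniteDimensional ℝ V]
    (s : Module.Dual ℝ V →ₗ[ℝ] V)
    (hs : ∀ ξ η : Module.Dual ℝ V, η (s ξ) = - ξ (s η))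
    (N : V →ₗ[ℝ] V)
    (hcomp : N ∘ₗ s = s ∘ₗ N.dualMap)
    (P : (Module.Dual ℝ V × Module.Dual ℝ V) → V × V)
    (hP : ∀ ζ : Module.Dual ℝ V × Module.Dual ℝ V,
      P ζ = (s ζ.1 - N (s ζ.2), N (s ζ.1) + s ζ.2)) :
    ({X : V | ∃ ζ : Module.Dual ℝ V × Module.Dual ℝ V, P ζ = (X, 0)} =
      (fun v => N (N v) + v) '' Set.range s) ∧
    (∀ lam : ℝ, lam ≠ -1 → N ∘ₗ N = lam • LinearMap.id →
      ({X : V | ∃ ζ : Module.Dual ℝ V × Module.Dual ℝ V, P ζ = (X, 0)} = Set.range s ∧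
        Set.range P = {p : V × V | p.1 ∈ Set.range s ∧ p.2 ∈ Set.range s})) := by
  have hNs : ∀ ξ, N (s ξ) = s (N.dualMap ξ) := fun ξ =>
    congrFun (congrArg DFunLike.coe hcomp) ξ
  have key : {X : V | ∃ ζ : Module.Dual ℝ V × Module.Dual ℝ V, P ζ = (X, 0)} =
      (fun v => N (N v) + v) '' Set.range s := by
    ext X
    simp only [Set.mem_setOf_eq, Set.mem_image, Set.mem_range, exists_exists_eq_and]
    constructor
    · rintro ⟨⟨ζ1, ζ2⟩, hζ⟩
      rw [hP] at hζ
      simp only [Prod.mk.injEq] at hζ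
      obtain ⟨h1, h2⟩ := hζ
      have hζ2 : s ζ2 = -(N (s ζ1)) := by
        rw [eq_neg_iff_add_eq_zero, add_comm]; exact h2
      refine ⟨ζ1, ?_⟩
      rw [← h1, hζ2, map_neg]
      abel
    · rintro ⟨ξ, rfl⟩
      refine ⟨(ξ, -N.dualMap ξ), ?_⟩
      rw [hP]
      simp only [Prod.mk.injEq]
      constructor
      · rw [map_neg, ← hNs, map_neg]; abel
      · rw [map_neg, ← hNs]; abel
  refine ⟨key, ?_⟩
  intro lam hlam hN2
  have hne : lam + 1 ≠ 0 := fun h => hlam (by linarith)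
  have hNN : ∀ v, N (N v) = lam • v := by
    intro v
    have := congrFun (congrArg DFunLike.coe hN2) v
    simpa using this
  constructor
  · rw [key]
    ext X
    simp only [Set.mem_image, Set.mem_range, exists_exists_eq_and]
    constructor
    · rintro ⟨ξ, rfl⟩
      refine ⟨(lam + 1) • ξ, ?_⟩
      rw [map_smul, hNN]
      module
    · rintro ⟨ξ, rfl⟩
      refine ⟨(lam + 1)⁻¹ • ξ, ?_⟩
      rw [map_smul, hNN]
      match_scalars <;> field_simp
  · ext p
    obtain ⟨a, b⟩ := p
    simp only [Set.mem_range, Set.mem_setOf_eq]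
    constructor
    · rintro ⟨⟨ζ1, ζ2⟩, hζ⟩
      rw [hP] at hζ
      simp only [Prod.mk.injEq] at hζ
      obtain ⟨h1, h2⟩ := hζ
      constructor
      · exact ⟨ζ1 - N.dualMap ζ2, by rw [map_sub, ← hNs, ← h1]⟩
      · exact ⟨N.dualMap ζ1 + ζ2, by rw [map_add, ← hNs, ← h2]⟩
    · rintro ⟨⟨ξ, hξ⟩, ⟨η, hη⟩⟩
      refine ⟨((lam + 1)⁻¹ • (ξ + N.dualMap η), (lam + 1)⁻¹ • (η - N.dualMap ξ)), ?_⟩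
      rw [hP]
      simp only [Prod.mk.injEq]
      have e1 : s ((lam + 1)⁻¹ • (ξ + N.dualMap η)) =
          (lam + 1)⁻¹ • (s ξ + N (s η)) := by
        rw [map_smul, map_add, hNs]
      have e2 : s ((lam + 1)⁻¹ • (η - N.dualMap ξ)) =
          (lam + 1)⁻¹ • (s η - N (s ξ)) := by
        rw [map_smul, map_sub, hNs]
      rw [e1, e2]
      constructor
      · rw [← hξ, map_smul, map_sub, hNN]
        match_scalars <;> field_simp <;> ring
      · rw [← hη, map_smul, map_add, hNN]
        match_scalars <;> field_simp <;> ring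
end
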